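/- Let X be a Banach space and let (A_m)_{m∈ℤ} be a sequence of bounded linear operators on X admitting an exponential dichotomy with constants C, λ > 0. Let f_n : X → X (n ∈ ℤ) satisfy ‖f_n(x) − f_n(y)‖ ≤ c‖x − y‖ for all n, x, y, where 0 < c < (1−e^{−λ})/(2C(1+e^{−λ})); set F_n = A_n + f_n. Then the system x_{n+1} = F_n(x_n) has the ℓ^∞-Lipschitz shadowing property with unique shadowing trajectories: there exists K > 0 such that for every ε > 0 and every sequence (y_n)_{n∈ℤ} ⊂ X with sup_{n∈ℤ} ‖y_{n+1} − F_n(y_n)‖ ≤ ε/K, there exists a unique sequence (x_n)_{n∈ℤ} with x_{n+1} = F_n(x_n) for all n ∈ ℤ and sup_{n∈ℤ} ‖x_n − y_n‖ ≤ ε. -/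

import Mathlib

/-!
The dichotomy yields a Green operator `h ↦ green A P h` sending a bounded sequence `h` to a
bounded solution of `z_{n+1} = A_n z_n + h_n`, of sup norm at most
`L = C (1 + e^{-λ}) / (1 - e^{-λ})` times that of `h`; it is the only bounded solution, because
a bounded solution of `v_{n+1} = A_n v_n` has stable part decaying forward and unstable part
decaying backward, hence vanishes. A trajectory `x = y + z` corresponds to a solution of
`z_{n+1} = A_n z_n + g_n(z_n)`, where `g_n` is `c`-Lipschitz and `g_n(0)` is the defect of `y`.
Bounded such `z` are exactly the fixed points of `z ↦ green A P (g ∘ z)` on `ℓ^∞(ℤ, X)`, a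
contraction as `L c < 1/2`, and the fixed point has norm at most `2 L sup ‖g_n(0)‖`.
-/

/-- The forward products `𝒜(m,n) = A_{m-1} ⋯ A_n` (equal to the identity when `m ≤ n`). -/
noncomputable def calA {X : Type*} [NormedAddCommGroup X] [NormedSpace ℝ X]
    (A : ℤ → X →L[ℝ] X) (m n : ℤ) : X →L[ℝ] X :=
  (List.range (m - n).toNat).foldl (fun B k => (A (n + (k : ℤ))).comp B)
    (ContinuousLinearMap.id ℝ X)

/-- The sequence `(A_m)_{m ∈ ℤ}` admits an exponential dichotomy with constants `C, lam > 0`.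
For `m ≤ n`, the operator `𝒜(m,n)` (the inverse of `𝒜(n,m)` restricted to `Ker P_m`)
is described implicitly: `w = 𝒜(m,n)(Id - P_n) x` iff `w ∈ Ker P_m` and
`𝒜(n,m) w = x - P_n x`. -/
def ExpDichotomy {X : Type*} [NormedAddCommGroup X] [NormedSpace ℝ X]
    (A : ℤ → X →L[ℝ] X) (C lam : ℝ) : Prop :=
  ∃ P : ℤ → X →L[ℝ] X,
    (∀ m, (P m).comp (P m) = P m) ∧
    (∀ m, (P (m + 1)).comp (A m) = (A m).comp (P m)) ∧
    (∀ m, Set.BijOn (A m) (LinearMap.ker (P m : X →ₗ[ℝ] X) : Set X)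
      (LinearMap.ker (P (m + 1) : X →ₗ[ℝ] X) : Set X)) ∧
    (∀ m n : ℤ, n ≤ m → ‖(calA A m n).comp (P n)‖ ≤ C * Real.exp (-lam * (m - n))) ∧
    (∀ m n : ℤ, m ≤ n → ∀ x w : X, w ∈ LinearMap.ker (P m : X →ₗ[ℝ] X) →
      calA A n m w = x - P n x → ‖w‖ ≤ C * Real.exp (-lam * (n - m)) * ‖x‖)

section

open Function Set
open scoped BoundedContinuousFunction

section Geometric

variable {E : Type*} [NormedAddCommGroup E] {lam : ℝ}

lemma exp_neg_lt_one (hlam : 0 < lam) : Real.exp (-lam) < 1 :=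
  Real.exp_lt_one_iff.2 (neg_lt_zero.2 hlam)

lemma summable_of_norm_le_exp_pow [CompleteSpace E] (hlam : 0 < lam) {u : ℕ → E} {a : ℝ}
    (hu : ∀ j, ‖u j‖ ≤ a * Real.exp (-lam) ^ j) : Summable u :=
  Summable.of_norm_bounded ((summable_geometric_of_lt_one (Real.exp_pos _).le
    (exp_neg_lt_one hlam)).mul_left a) hu

lemma norm_tsum_le_of_norm_le_exp_pow (hlam : 0 < lam) {u : ℕ → E} {a : ℝ}
    (hu : ∀ j, ‖u j‖ ≤ a * Real.exp (-lam) ^ j) :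
    ‖∑' j, u j‖ ≤ a * (1 - Real.exp (-lam))⁻¹ :=
  tsum_of_norm_bounded ((hasSum_geometric_of_lt_one (Real.exp_pos _).le
    (exp_neg_lt_one hlam)).mul_left a) hu

lemma eq_zero_of_norm_le_mul_exp_pow (hlam : 0 < lam) {x : E} {a : ℝ}
    (hx : ∀ N : ℕ, ‖x‖ ≤ a * Real.exp (-lam) ^ N) : x = 0 := by
  have hlim := (tendsto_pow_atTop_nhds_zero_of_lt_one (Real.exp_pos _).le
    (exp_neg_lt_one hlam)).const_mul a
  rw [mul_zero] at hlim
  exact norm_le_zero_iff.1 (ge_of_tendsto' hlim hx)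

end Geometric

variable {X : Type*} [NormedAddCommGroup X] [NormedSpace ℝ X]

section Evolution

variable (A : ℤ → X →L[ℝ] X)

lemma calA_of_le {m n : ℤ} (h : m ≤ n) : calA A m n = ContinuousLinearMap.id ℝ X := by
  simp [calA, Int.toNat_of_nonpos (Int.sub_nonpos_of_le h)]

lemma calA_self_apply (n : ℤ) (x : X) : calA A n n x = x := by
  simp [calA_of_le A le_rfl]

lemma calA_succ {m n : ℤ} (h : n ≤ m) : calA A (m + 1) n = (A m).comp (calA A m n) := by
  have hlen : (m + 1 - n).toNat = (m - n).toNat + 1 := by omega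
  have hlast : n + max (m - n) 0 = m := by omega
  simp [calA, hlen, List.range_succ, hlast]

lemma calA_succ_apply {m n : ℤ} (h : n ≤ m) (x : X) :
    calA A (m + 1) n x = A m (calA A m n x) := by
  rw [calA_succ A h, ContinuousLinearMap.comp_apply]

lemma calA_comp {k n m : ℤ} (hkn : k ≤ n) (hnm : n ≤ m) :
    (calA A m n).comp (calA A n k) = calA A m k := by
  induction m, hnm using Int.leInduction with
  | base => ext x; simp [calA_self_apply]
  | succ m hnm ih =>
    rw [calA_succ A hnm, calA_succ A (hkn.trans hnm), ContinuousLinearMap.comp_assoc, ih]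

lemma calA_apply_of_forall_succ {v : ℤ → X} (hv : ∀ n, v (n + 1) = A n (v n))
    {m n : ℤ} (h : m ≤ n) : v n = calA A n m (v m) := by
  induction n, h using Int.leInduction with
  | base => rw [calA_self_apply]
  | succ n hmn ih => rw [hv, ih, calA_succ_apply A hmn]

end Evolution

structure IsInvariantSplitting (A P : ℤ → X →L[ℝ] X) : Prop where
  idem : ∀ m, (P m).comp (P m) = P m
  proj_comp : ∀ m, (P (m + 1)).comp (A m) = (A m).comp (P m)
  bijOn_ker : ∀ m, BijOn (A m) (LinearMap.ker (P m : X →ₗ[ℝ] X) : Set X)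
    (LinearMap.ker (P (m + 1) : X →ₗ[ℝ] X) : Set X)

structure IsExpDichotomy (A P : ℤ → X →L[ℝ] X) (C lam : ℝ) : Prop
    extends IsInvariantSplitting A P where
  norm_stable_le : ∀ m n : ℤ, n ≤ m → ‖(calA A m n).comp (P n)‖ ≤ C * Real.exp (-lam * (m - n))
  norm_unstable_le : ∀ m n : ℤ, m ≤ n → ∀ x w : X, P m w = 0 → calA A n m w = x - P n x →
    ‖w‖ ≤ C * Real.exp (-lam * (n - m)) * ‖x‖

theorem ExpDichotomy.exists_isExpDichotomy {A : ℤ → X →L[ℝ] X} {C lam : ℝ}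
    (h : ExpDichotomy A C lam) : ∃ P, IsExpDichotomy A P C lam := by
  obtain ⟨P, hidem, hcomp, hbij, hstable, hunstable⟩ := h
  exact ⟨P, ⟨hidem, hcomp, hbij⟩, hstable, fun m n hmn x w hw => hunstable m n hmn x w hw⟩

/-- The paper's `𝒜(m,n)(Id - P_n)` for `m ≤ n`: the preimage in `ker P_m`, under `𝒜(n,m)`,
of the unstable component of `x`. -/
noncomputable def calABack (A P : ℤ → X →L[ℝ] X) (m n : ℤ) (x : X) : X :=
  invFunOn (calA A n m) (LinearMap.ker (P m : X →ₗ[ℝ] X)) (x - P n x)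

namespace IsInvariantSplitting

variable {A P : ℤ → X →L[ℝ] X}

lemma proj_sub_self (hP : IsInvariantSplitting A P) (m : ℤ) (x : X) :
    P m (x - P m x) = 0 := by
  simp [← ContinuousLinearMap.comp_apply, hP.idem m]

lemma proj_comp_calA (hP : IsInvariantSplitting A P) {m n : ℤ} (h : n ≤ m) :
    (P m).comp (calA A m n) = (calA A m n).comp (P n) := by
  induction m, h using Int.leInduction with
  | base => simp [calA_of_le A le_rfl]
  | succ m hnm ih =>
    rw [calA_succ A hnm, ← ContinuousLinearMap.comp_assoc, hP.proj_comp,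
      ContinuousLinearMap.comp_assoc, ih, ContinuousLinearMap.comp_assoc]

lemma bijOn_calA (hP : IsInvariantSplitting A P) {m n : ℤ} (h : n ≤ m) :
    BijOn (calA A m n) (LinearMap.ker (P n : X →ₗ[ℝ] X) : Set X)
      (LinearMap.ker (P m : X →ₗ[ℝ] X) : Set X) := by
  induction m, h using Int.leInduction with
  | base => simpa [calA_of_le A le_rfl] using bijOn_id _
  | succ m hnm ih =>
    rw [calA_succ A hnm, ContinuousLinearMap.coe_comp]
    exact (hP.bijOn_ker m).comp ih

lemma proj_calABack (hP : IsInvariantSplitting A P) {m n : ℤ} (h : m ≤ n) (x : X) :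
    P m (calABack A P m n x) = 0 :=
  invFunOn_mem ((hP.bijOn_calA h).surjOn (hP.proj_sub_self n x))

lemma calA_calABack (hP : IsInvariantSplitting A P) {m n : ℤ} (h : m ≤ n) (x : X) :
    calA A n m (calABack A P m n x) = x - P n x :=
  invFunOn_eq ((hP.bijOn_calA h).surjOn (hP.proj_sub_self n x))

lemma calABack_eq (hP : IsInvariantSplitting A P) {m n : ℤ} (h : m ≤ n) {x w : X}
    (hw : P m w = 0) (hxw : calA A n m w = x - P n x) :
    calABack A P m n x = w :=
  (hP.bijOn_calA h).injOn (hP.proj_calABack h x) hw (by rw [hP.calA_calABack h, hxw])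

lemma calABack_sub (hP : IsInvariantSplitting A P) {m n : ℤ} (h : m ≤ n) (x y : X) :
    calABack A P m n (x - y) = calABack A P m n x - calABack A P m n y := by
  refine hP.calABack_eq h (by simp [hP.proj_calABack h]) ?_
  rw [map_sub, hP.calA_calABack h, hP.calA_calABack h, map_sub]
  abel

lemma calABack_self (hP : IsInvariantSplitting A P) (m : ℤ) (x : X) :
    calABack A P m m x = x - P m x :=
  hP.calABack_eq le_rfl (hP.proj_sub_self m x) (calA_self_apply A m _)

lemma apply_calABack (hP : IsInvariantSplitting A P) {m n : ℤ} (h : m < n) (x : X) :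
    A m (calABack A P m n x) = calABack A P (m + 1) n x := by
  refine (hP.calABack_eq h ((hP.bijOn_ker m).mapsTo (hP.proj_calABack h.le x)) ?_).symm
  rw [← calA_self_apply A m (calABack A P m n x), ← calA_succ_apply A le_rfl,
    ← ContinuousLinearMap.comp_apply, calA_comp A (by omega) h, hP.calA_calABack h.le]

end IsInvariantSplitting

noncomputable def stablePart (A P : ℤ → X →L[ℝ] X) (h : ℤ → X) (n : ℤ) : X :=
  ∑' j : ℕ, calA A n (n - j) (P (n - j) (h (n - 1 - j)))

noncomputable def unstablePart (A P : ℤ → X →L[ℝ] X) (h : ℤ → X) (n : ℤ) : X :=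
  ∑' j : ℕ, calABack A P n (n + (j + 1 : ℕ)) (h (n + j))

/-- Green's operator of the dichotomy: the paper's
`x_n = ∑_{k < n} 𝒜(n,k+1) P_{k+1} h_k - ∑_{k ≥ n} 𝒜(n,k+1)(Id - P_{k+1}) h_k`,
with `k = n - 1 - j` in the first sum and `k = n + j` in the second. -/
noncomputable def green (A P : ℤ → X →L[ℝ] X) (h : ℤ → X) (n : ℤ) : X :=
  stablePart A P h n - unstablePart A P h n

noncomputable def greenConst (C lam : ℝ) : ℝ :=
  C * (1 + Real.exp (-lam)) / (1 - Real.exp (-lam))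

lemma greenConst_nonneg {C lam : ℝ} (hC : 0 ≤ C) (hlam : 0 < lam) : 0 ≤ greenConst C lam :=
  div_nonneg (by positivity) (sub_nonneg.2 (exp_neg_lt_one hlam).le)

namespace IsExpDichotomy

variable {A P : ℤ → X →L[ℝ] X} {C lam M : ℝ} {h : ℤ → X}

lemma const_nonneg (hd : IsExpDichotomy A P C lam) : 0 ≤ C := by
  simpa using (norm_nonneg _).trans (hd.norm_stable_le 0 0 le_rfl)

lemma norm_calA_proj_le (hd : IsExpDichotomy A P C lam) (n : ℤ) (j : ℕ) (x : X) :
    ‖calA A n (n - j) (P (n - j) x)‖ ≤ C * Real.exp (-lam) ^ j * ‖x‖ := by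
  have hexp : Real.exp (-lam * ((n : ℝ) - ((n - j : ℤ) : ℝ))) = Real.exp (-lam) ^ j := by
    rw [← Real.exp_nat_mul]; push_cast; ring_nf
  calc ‖calA A n (n - j) (P (n - j) x)‖ = ‖(calA A n (n - j)).comp (P (n - j)) x‖ := rfl
    _ ≤ ‖(calA A n (n - j)).comp (P (n - j))‖ * ‖x‖ := ContinuousLinearMap.le_opNorm _ _
    _ ≤ C * Real.exp (-lam) ^ j * ‖x‖ := by
      rw [← hexp]
      gcongr
      exact hd.norm_stable_le n (n - j) (by omega)

lemma norm_calABack_le (hd : IsExpDichotomy A P C lam) (m : ℤ) (j : ℕ) (x : X) :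
    ‖calABack A P m (m + j) x‖ ≤ C * Real.exp (-lam) ^ j * ‖x‖ := by
  have hexp : Real.exp (-lam * (((m + j : ℤ) : ℝ) - m)) = Real.exp (-lam) ^ j := by
    rw [← Real.exp_nat_mul]; push_cast; ring_nf
  have hmn : m ≤ m + j := by omega
  rw [← hexp]
  exact hd.norm_unstable_le m (m + j) hmn x _ (hd.proj_calABack hmn x)
    (hd.calA_calABack hmn x)

lemma norm_stableTerm_le (hd : IsExpDichotomy A P C lam) (hh : ∀ k, ‖h k‖ ≤ M)
    (n : ℤ) (j : ℕ) (k : ℤ) :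
    ‖calA A n (n - j) (P (n - j) (h k))‖ ≤ C * M * Real.exp (-lam) ^ j := by
  have := hd.const_nonneg
  calc _ ≤ C * Real.exp (-lam) ^ j * ‖h k‖ := hd.norm_calA_proj_le n j _
    _ ≤ C * Real.exp (-lam) ^ j * M := by gcongr; exact hh _
    _ = C * M * Real.exp (-lam) ^ j := by ring

lemma norm_unstableTerm_le (hd : IsExpDichotomy A P C lam) (hh : ∀ k, ‖h k‖ ≤ M)
    (m : ℤ) (j : ℕ) (k : ℤ) :
    ‖calABack A P m (m + j) (h k)‖ ≤ C * M * Real.exp (-lam) ^ j := by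
  have := hd.const_nonneg
  calc _ ≤ C * Real.exp (-lam) ^ j * ‖h k‖ := hd.norm_calABack_le m j _
    _ ≤ C * Real.exp (-lam) ^ j * M := by gcongr; exact hh _
    _ = C * M * Real.exp (-lam) ^ j := by ring

lemma norm_unstablePartTerm_le (hd : IsExpDichotomy A P C lam) (hh : ∀ k, ‖h k‖ ≤ M)
    (n : ℤ) (j : ℕ) :
    ‖calABack A P n (n + (j + 1 : ℕ)) (h (n + j))‖
      ≤ C * M * Real.exp (-lam) * Real.exp (-lam) ^ j :=
  (hd.norm_unstableTerm_le hh n (j + 1) _).trans_eq (by ring)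

lemma norm_green_le (hd : IsExpDichotomy A P C lam) (hlam : 0 < lam)
    (hh : ∀ k, ‖h k‖ ≤ M) (n : ℤ) : ‖green A P h n‖ ≤ greenConst C lam * M := by
  have hr : 1 - Real.exp (-lam) ≠ 0 :=
    (sub_pos.2 (exp_neg_lt_one hlam)).ne'
  calc ‖green A P h n‖ ≤ ‖stablePart A P h n‖ + ‖unstablePart A P h n‖ := norm_sub_le _ _
    _ ≤ C * M * (1 - Real.exp (-lam))⁻¹ + C * M * Real.exp (-lam) * (1 - Real.exp (-lam))⁻¹ :=
      add_le_add (norm_tsum_le_of_norm_le_exp_pow hlam (hd.norm_stableTerm_le hh n · _))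
        (norm_tsum_le_of_norm_le_exp_pow hlam (hd.norm_unstablePartTerm_le hh n))
    _ = greenConst C lam * M := by
      rw [greenConst]
      field_simp

lemma eq_zero_of_forall_succ (hd : IsExpDichotomy A P C lam) (hlam : 0 < lam) {v : ℤ → X}
    (hv : ∀ n, v (n + 1) = A n (v n)) (hb : ∀ n, ‖v n‖ ≤ M) : v = 0 := by
  have hstable (n : ℤ) : P n (v n) = 0 := by
    refine eq_zero_of_norm_le_mul_exp_pow hlam (a := C * M) fun N => ?_
    rw [calA_apply_of_forall_succ A hv (show n - N ≤ n by omega), ← ContinuousLinearMap.comp_apply,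
      hd.proj_comp_calA (by omega), ContinuousLinearMap.comp_apply]
    exact hd.norm_stableTerm_le hb n N _
  funext n
  refine eq_zero_of_norm_le_mul_exp_pow hlam (a := C * M) fun N => ?_
  have hback : calABack A P n (n + N) (v (n + N)) = v n := by
    refine hd.calABack_eq (by omega) (hstable n) ?_
    rw [← calA_apply_of_forall_succ A hv (by omega), hstable, sub_zero]
  rw [← hback]
  exact hd.norm_unstableTerm_le hb n N _

variable [CompleteSpace X]

lemma stablePart_succ (hd : IsExpDichotomy A P C lam) (hlam : 0 < lam)
    (hh : ∀ k, ‖h k‖ ≤ M) (n : ℤ) :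
    stablePart A P h (n + 1) = P (n + 1) (h n) + A n (stablePart A P h n) := by
  rw [stablePart,
    (summable_of_norm_le_exp_pow hlam (hd.norm_stableTerm_le hh (n + 1) · _)).tsum_eq_zero_add,
    stablePart, ContinuousLinearMap.map_tsum _
      (summable_of_norm_le_exp_pow hlam (hd.norm_stableTerm_le hh n · _))]
  congr 1
  · simp [calA_self_apply]
  · refine tsum_congr fun j => ?_
    have hj : n + 1 - ((j + 1 : ℕ) : ℤ) = n - j := by push_cast; ring
    rw [hj, show n + 1 - 1 - ((j + 1 : ℕ) : ℤ) = n - 1 - j by push_cast; ring,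
      ← calA_succ_apply A (by omega)]

lemma unstablePart_succ (hd : IsExpDichotomy A P C lam) (hlam : 0 < lam)
    (hh : ∀ k, ‖h k‖ ≤ M) (n : ℤ) :
    A n (unstablePart A P h n) = (h n - P (n + 1) (h n)) + unstablePart A P h (n + 1) := by
  have hshift : ∀ j : ℕ, A n (calABack A P n (n + (j + 1 : ℕ)) (h (n + j)))
      = calABack A P (n + 1) (n + 1 + j) (h (n + j)) := fun j => by
    rw [hd.apply_calABack (by omega)]
    congr 1
    push_cast; ring
  rw [unstablePart, ContinuousLinearMap.map_tsum _
      (summable_of_norm_le_exp_pow hlam (hd.norm_unstablePartTerm_le hh n)),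
    tsum_congr hshift,
    (summable_of_norm_le_exp_pow hlam (hd.norm_unstableTerm_le hh (n + 1) · _)).tsum_eq_zero_add]
  congr 1
  · simp [hd.calABack_self]
  · refine tsum_congr fun j => ?_
    rw [show n + ((j + 1 : ℕ) : ℤ) = n + 1 + j by push_cast; ring]

lemma green_succ (hd : IsExpDichotomy A P C lam) (hlam : 0 < lam)
    (hh : ∀ k, ‖h k‖ ≤ M) (n : ℤ) :
    green A P h (n + 1) = A n (green A P h n) + h n := by
  rw [green, green, map_sub, hd.stablePart_succ hlam hh, hd.unstablePart_succ hlam hh]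
  abel

lemma green_sub (hd : IsExpDichotomy A P C lam) (hlam : 0 < lam) {h' : ℤ → X} {M' : ℝ}
    (hh : ∀ k, ‖h k‖ ≤ M) (hh' : ∀ k, ‖h' k‖ ≤ M') (n : ℤ) :
    green A P (h - h') n = green A P h n - green A P h' n := by
  have hstable : stablePart A P (h - h') n = stablePart A P h n - stablePart A P h' n := by
    rw [stablePart, stablePart, stablePart, ← Summable.tsum_sub
      (summable_of_norm_le_exp_pow hlam (hd.norm_stableTerm_le hh n · _))
      (summable_of_norm_le_exp_pow hlam (hd.norm_stableTerm_le hh' n · _))]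
    simp only [Pi.sub_apply, map_sub]
  have hunstable :
      unstablePart A P (h - h') n = unstablePart A P h n - unstablePart A P h' n := by
    rw [unstablePart, unstablePart, unstablePart, ← Summable.tsum_sub
      (summable_of_norm_le_exp_pow hlam (hd.norm_unstablePartTerm_le hh n))
      (summable_of_norm_le_exp_pow hlam (hd.norm_unstablePartTerm_le hh' n))]
    refine tsum_congr fun j => ?_
    rw [Pi.sub_apply, hd.calABack_sub (by omega)]
  rw [green, green, green, hstable, hunstable]
  abel

lemma green_eq_iff_forall_succ (hd : IsExpDichotomy A P C lam) (hlam : 0 < lam)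
    (hh : ∀ k, ‖h k‖ ≤ M) {z : ℤ → X} {M' : ℝ} (hzb : ∀ n, ‖z n‖ ≤ M') :
    green A P h = z ↔ ∀ n, z (n + 1) = A n (z n) + h n := by
  refine ⟨fun hz n => hz ▸ hd.green_succ hlam hh n, fun hz => ?_⟩
  refine (sub_eq_zero.1 (hd.eq_zero_of_forall_succ hlam (fun n => ?_) fun n =>
    (norm_sub_le _ _).trans (add_le_add (hzb n) (hd.norm_green_le hlam hh n)))).symm
  simp only [Pi.sub_apply, hz, hd.green_succ hlam hh, map_sub]
  abel

theorem existsUnique_bounded_solution (hd : IsExpDichotomy A P C lam) (hlam : 0 < lam)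
    {g : ℤ → X → X} {c δ : ℝ} (hc : 0 ≤ c) (hg : ∀ n u v, ‖g n u - g n v‖ ≤ c * ‖u - v‖)
    (hg0 : ∀ n, ‖g n 0‖ ≤ δ) (hcontr : greenConst C lam * c < 1) :
    ∃ z : ℤ → X, (∀ n, z (n + 1) = A n (z n) + g n (z n)) ∧
      (∀ n, ‖z n‖ ≤ greenConst C lam * δ / (1 - greenConst C lam * c)) ∧
      ∀ (z' : ℤ → X) (M : ℝ), (∀ n, z' (n + 1) = A n (z' n) + g n (z' n)) →
        (∀ n, ‖z' n‖ ≤ M) → z' = z := by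
  set L := greenConst C lam
  have hL : 0 ≤ L := greenConst_nonneg hd.const_nonneg hlam
  have hδ : 0 ≤ δ := (norm_nonneg _).trans (hg0 0)
  have hgz (z : ℤ →ᵇ X) (n : ℤ) : ‖g n (z n)‖ ≤ c * ‖z‖ + δ :=
    calc ‖g n (z n)‖ ≤ ‖g n 0‖ + ‖g n (z n) - g n 0‖ := norm_le_norm_add_norm_sub' _ _
      _ ≤ δ + c * ‖z n - 0‖ := add_le_add (hg0 n) (hg n _ _)
      _ ≤ c * ‖z‖ + δ := by rw [sub_zero, add_comm]; gcongr; exact z.norm_coe_le_norm n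
  let Φ : (ℤ →ᵇ X) → (ℤ →ᵇ X) := fun z =>
    .ofNormedAddCommGroup (green A P fun n => g n (z n)) continuous_of_discreteTopology _
      (hd.norm_green_le hlam (hgz z))
  have hΦ : ContractingWith (L * c).toNNReal Φ := by
    refine ⟨by simpa using hcontr, LipschitzWith.of_dist_le_mul fun z z' => ?_⟩
    rw [Real.coe_toNNReal _ (mul_nonneg hL hc), BoundedContinuousFunction.dist_le (by positivity)]
    intro n
    have hdiff (k : ℤ) : ‖((fun n => g n (z n)) - fun n => g n (z' n)) k‖ ≤ c * dist z z' :=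
      calc ‖g k (z k) - g k (z' k)‖ ≤ c * ‖z k - z' k‖ := hg k _ _
        _ ≤ c * dist z z' := by rw [← dist_eq_norm]; gcongr; exact z.dist_coe_le_dist k
    calc dist (Φ z n) (Φ z' n)
        = ‖green A P ((fun n => g n (z n)) - fun n => g n (z' n)) n‖ := by
          rw [dist_eq_norm, hd.green_sub hlam (hgz z) (hgz z') n]; rfl
      _ ≤ L * (c * dist z z') := hd.norm_green_le hlam hdiff n
      _ = L * c * dist z z' := by ring
  have hfix (z : ℤ →ᵇ X) : Φ z = z ↔ ∀ n, z (n + 1) = A n (z n) + g n (z n) :=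
    DFunLike.coe_fn_eq.symm.trans (hd.green_eq_iff_forall_succ hlam (hgz z) z.norm_coe_le_norm)
  set z₀ := ContractingWith.fixedPoint Φ hΦ
  refine ⟨z₀, (hfix z₀).1 hΦ.fixedPoint_isFixedPt, fun n => ?_, fun z' M hz' hM => ?_⟩
  · have hz₀ : ‖z₀‖ ≤ L * (c * ‖z₀‖ + δ) :=
      (congrArg norm (hΦ.fixedPoint_isFixedPt : Φ z₀ = z₀)).symm.trans_le
        (BoundedContinuousFunction.norm_ofNormedAddCommGroup_le _ (by positivity) _)
    rw [le_div_iff₀ (by linarith)]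
    nlinarith [z₀.norm_coe_le_norm n]
  · let w : ℤ →ᵇ X := .ofNormedAddCommGroup z' continuous_of_discreteTopology M hM
    exact congrArg DFunLike.coe (hΦ.fixedPoint_unique ((hfix w).2 hz'))

end IsExpDichotomy

lemma add_trajectory_iff (A : ℤ → X →L[ℝ] X) (f : ℤ → X → X) (y z : ℤ → X) (n : ℤ) :
    y (n + 1) + z (n + 1) = A n (y n + z n) + f n (y n + z n) ↔
      z (n + 1) = A n (z n) + (A n (y n) + f n (y n + z n) - y (n + 1)) := by
  rw [map_add]
  constructor <;> intro h
  · rw [← add_sub_cancel_left (y (n + 1)) (z (n + 1)), h]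
    abel
  · rw [h]
    abel

end

/-- Theorem 3.7: if `(A_m)_{m∈ℤ}` admits an exponential dichotomy with constants `C, lam > 0`
and the `f_n` are `c`-Lipschitz with `0 < c < (1-e^{-lam})/(2C(1+e^{-lam}))`, then the system
`x_{n+1} = A_n x_n + f_n(x_n)` has the `ℓ^∞`-Lipschitz shadowing property, and the shadowing
trajectory is unique. -/
theorem dichotomy_lipschitz_shadowing_unique
    {X : Type*} [NormedAddCommGroup X] [NormedSpace ℝ X] [CompleteSpace X]
    (A : ℤ → X →L[ℝ] X) (C lam : ℝ) (hC : 0 < C) (hlam : 0 < lam)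
    (h : ExpDichotomy A C lam)
    (f : ℤ → X → X) (c : ℝ) (hc : 0 < c)
    (hcsmall : c < (1 - Real.exp (-lam)) / (2 * C * (1 + Real.exp (-lam))))
    (hf : ∀ n : ℤ, ∀ x y : X, ‖f n x - f n y‖ ≤ c * ‖x - y‖) :
    ∃ K : ℝ, 0 < K ∧ ∀ ε : ℝ, 0 < ε → ∀ y : ℤ → X,
      (∀ n : ℤ, ‖y (n + 1) - (A n (y n) + f n (y n))‖ ≤ ε / K) →
      ∃! x : ℤ → X, (∀ n : ℤ, x (n + 1) = A n (x n) + f n (x n)) ∧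
        ∀ n : ℤ, ‖x n - y n‖ ≤ ε := by
  obtain ⟨P, hd⟩ := h.exists_isExpDichotomy
  set L := greenConst C lam
  have hr : Real.exp (-lam) < 1 := exp_neg_lt_one hlam
  have hL : 0 < L := div_pos (by positivity) (sub_pos.2 hr)
  have hLc : L * c < 1 / 2 :=
    calc L * c < L * ((1 - Real.exp (-lam)) / (2 * C * (1 + Real.exp (-lam)))) :=
          mul_lt_mul_of_pos_left hcsmall hL
      _ = 1 / 2 := by
        simp only [L, greenConst]
        field_simp [(sub_pos.2 hr).ne']
  refine ⟨2 * L, by positivity, fun ε hε y hy => ?_⟩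
  obtain ⟨z, hz, hzε, hzuniq⟩ := hd.existsUnique_bounded_solution hlam
    (g := fun n u => A n (y n) + f n (y n + u) - y (n + 1)) (δ := ε / (2 * L)) hc.le
    (fun n u v => by simpa using hf n (y n + u) (y n + v))
    (fun n => by simpa [norm_sub_rev] using hy n) (by linarith)
  have hzε' (n : ℤ) : ‖z n‖ ≤ ε := by
    have hLδ : L * (ε / (2 * L)) = ε / 2 := by field_simp
    refine (hzε n).trans ?_
    rw [hLδ, div_le_iff₀ (by linarith)]
    nlinarith
  refine ⟨y + z, ⟨fun n => (add_trajectory_iff A f y z n).2 (hz n), fun n => by simpa using hzε' n⟩,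
    fun x ⟨hx, hxy⟩ => ?_⟩
  have hxz : x - y = z := hzuniq (x - y) ε
    (fun n => (add_trajectory_iff A f y (x - y) n).1 (by simpa using hx n)) hxy
  rw [← hxz, add_sub_cancel]
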